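/- arXiv:2108.09543 — 2 statements merged into one kernel-verified Lean document; each statement's English description precedes it below -/
import Mathlib

section
/- Let 𝓕 be an ω-closed family of nonempty inductive subsets of ℕ. The map 𝔥 : B_ω^𝓕 → B_ω defined by 𝔥(i,j,F) = (i,j) is a surjective semigroup homomorphism onto the bicyclic monoid, and the congruence on B_ω^𝓕 induced by 𝔥 is not a group congruence; in particular, there exist congruences on B_ω^𝓕 that are not group congruences. -/
/-- The shift `s + F = {s + k : k ∈ F}` of a set of naturals by an integer,
taken as a subset of `ℕ`. -/
def natShift (s : ℤ) (F : Set ℕ) : Set ℕ := {m : ℕ | ∃ k ∈ F, (m : ℤ) = s + (k : ℤ)}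

/-- `[k) = {i : ℕ | k ≤ i}`. -/
def upSet (k : ℕ) : Set ℕ := {i : ℕ | k ≤ i}

/-- A subset `F ⊆ ℕ` is inductive if `i ∈ F` implies `i + 1 ∈ F`. -/
def IsInductiveSet (F : Set ℕ) : Prop := ∀ i ∈ F, i + 1 ∈ F

/-- A nonempty family `𝓕` of subsets of `ℕ` is `ω`-closed if
`F₁ ∩ (−n + F₂) ∈ 𝓕` for all `n ∈ ℕ` and `F₁, F₂ ∈ 𝓕`. -/
def IsOmegaClosed (𝓕 : Set (Set ℕ)) : Prop :=
  𝓕.Nonempty ∧ ∀ (n : ℕ), ∀ F₁ ∈ 𝓕, ∀ F₂ ∈ 𝓕, F₁ ∩ natShift (-(n : ℤ)) F₂ ∈ 𝓕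

/-- A bundled `ω`-closed family of subsets of `ℕ`. -/
structure OmegaFamily : Type where
  sets : Set (Set ℕ)
  closed : IsOmegaClosed sets

/-- The family consists of nonempty inductive subsets of `ℕ`. -/
def InductiveNonempty (𝓕 : OmegaFamily) : Prop :=
  ∀ F ∈ 𝓕.sets, F.Nonempty ∧ IsInductiveSet F

/-- The multiplication of `B_ω^𝓕` on raw triples `(i, j, F)`. -/
def bfMulRaw (x y : ℕ × ℕ × Set ℕ) : ℕ × ℕ × Set ℕ :=
  if x.2.1 < y.1 then
    (x.1 + (y.1 - x.2.1), y.2.1, natShift ((x.2.1 : ℤ) - (y.1 : ℤ)) x.2.2 ∩ y.2.2)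
  else if x.2.1 = y.1 then (x.1, y.2.1, x.2.2 ∩ y.2.2)
  else (x.1, (x.2.1 - y.1) + y.2.1, x.2.2 ∩ natShift ((y.1 : ℤ) - (x.2.1 : ℤ)) y.2.2)

lemma natShift_zero (F : Set ℕ) : natShift 0 F = F := by
  ext m; simp [natShift]

/-- The underlying set of the semigroup `B_ω^𝓕`. -/
def BF (𝓕 : OmegaFamily) : Type := {p : ℕ × ℕ × Set ℕ // p.2.2 ∈ 𝓕.sets}

lemma bfMulRaw_mem (𝓕 : OmegaFamily) {x y : ℕ × ℕ × Set ℕ}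
    (hx : x.2.2 ∈ 𝓕.sets) (hy : y.2.2 ∈ 𝓕.sets) : (bfMulRaw x y).2.2 ∈ 𝓕.sets := by
  obtain ⟨i₁, j₁, F₁⟩ := x
  obtain ⟨i₂, j₂, F₂⟩ := y
  simp only [bfMulRaw]
  split_ifs with h h'
  · have e : ((j₁ : ℤ) - (i₂ : ℤ)) = -(((i₂ - j₁ : ℕ)) : ℤ) := by omega
    simp only []
    rw [e, Set.inter_comm]
    exact 𝓕.closed.2 _ _ hy _ hx
  · have e : (F₁ ∩ F₂ : Set ℕ) = F₁ ∩ natShift (-((0 : ℕ) : ℤ)) F₂ := by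
      simp [natShift_zero]
    simp only []
    rw [e]
    exact 𝓕.closed.2 0 _ hx _ hy
  · have e : ((i₂ : ℤ) - (j₁ : ℤ)) = -(((j₁ - i₂ : ℕ)) : ℤ) := by omega
    simp only []
    rw [e]
    exact 𝓕.closed.2 _ _ hx _ hy

/-- The multiplication of the semigroup `B_ω^𝓕`. -/
instance (𝓕 : OmegaFamily) : Mul (BF 𝓕) :=
  ⟨fun x y => ⟨bfMulRaw x.1 y.1, bfMulRaw_mem 𝓕 x.2 y.2⟩⟩

/-- The bicyclic monoid on `ℕ × ℕ`. -/
def Bicyclic : Type := ℕ × ℕ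

instance : Mul Bicyclic :=
  ⟨fun a b => ((a.1 + b.1 - min a.2 b.1, a.2 + b.2 - min a.2 b.1) : ℕ × ℕ)⟩

/-- A congruence `c` on a multiplicative structure `S` is a group congruence
if the quotient `S/c` is a group: its multiplication is associative and has a
two-sided identity and two-sided inverses. -/
def IsGroupCongruence {S : Type*} [Mul S] (c : Con S) : Prop :=
  (∀ a b d : c.Quotient, a * b * d = a * (b * d)) ∧
  ∃ e : c.Quotient, (∀ a, e * a = a ∧ a * e = a) ∧ ∀ a, ∃ b, b * a = e ∧ a * b = e

namespace Bicyclic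

/-- An anonymous pair would elaborate at `ℕ × ℕ` and pick up its componentwise `Mul`. -/
def mk (i j : ℕ) : Bicyclic := (i, j)

lemma mk_mul_mk (i₁ j₁ i₂ j₂ : ℕ) :
    mk i₁ j₁ * mk i₂ j₂ = mk (i₁ + i₂ - min j₁ i₂) (j₁ + j₂ - min j₁ i₂) := rfl

lemma mk_fst_snd (a : Bicyclic) : mk a.1 a.2 = a := rfl

lemma mk_inj {i₁ j₁ i₂ j₂ : ℕ} : mk i₁ j₁ = mk i₂ j₂ ↔ i₁ = i₂ ∧ j₁ = j₂ := Prod.mk_inj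

lemma mul_mk_zero_zero (a : Bicyclic) : a * mk 0 0 = a := by
  rw [← mk_fst_snd a, mk_mul_mk]
  simp

lemma mul_mk_zero_one_ne (a : Bicyclic) : a * mk 0 1 ≠ mk 0 0 := by
  rw [← mk_fst_snd a, mk_mul_mk, Ne, mk_inj]
  omega

end Bicyclic

lemma exists_identity_and_left_inverses_of_isGroupCongruence_ker {S M : Type*} [Mul S] [Mul M]
    (f : S →ₙ* M) (h : IsGroupCongruence (Con.ker f)) :
    ∃ e : S, ∀ a : S, f e * f a = f a ∧ ∃ b : S, f b * f a = f e := by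
  obtain ⟨-, e, hid, hinv⟩ := h
  induction e using Con.induction_on with | _ e => ?_
  refine ⟨e, fun a => ⟨?_, ?_⟩⟩
  · rw [← map_mul, ← Con.ker_rel, ← Con.eq, Con.coe_mul]
    exact (hid a).1
  · obtain ⟨b, hb, -⟩ := hinv a
    induction b using Con.induction_on with | _ b => ?_
    refine ⟨b, ?_⟩
    rw [← map_mul, ← Con.ker_rel, ← Con.eq, Con.coe_mul]
    exact hb

/-- The identity of a group quotient would have to map to `(0, 0)`, but `(0, 1)` has no left
inverse in `B_ω`. -/
lemma not_isGroupCongruence_ker_of_surjective {S : Type*} [Mul S] (f : S →ₙ* Bicyclic)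
    (hf : Function.Surjective f) : ¬ IsGroupCongruence (Con.ker f) := by
  intro h
  obtain ⟨e, he⟩ := exists_identity_and_left_inverses_of_isGroupCongruence_ker f h
  obtain ⟨z, hz⟩ := hf (.mk 0 0)
  obtain ⟨x, hx⟩ := hf (.mk 0 1)
  have he_zero : f e = .mk 0 0 := by
    simpa only [hz, Bicyclic.mul_mk_zero_zero] using (he z).1
  obtain ⟨b, hb⟩ := (he x).2
  rw [hx, he_zero] at hb
  exact Bicyclic.mul_mk_zero_one_ne _ hb

def bfIndex (x : ℕ × ℕ × Set ℕ) : Bicyclic := .mk x.1 x.2.1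

lemma bfIndex_bfMulRaw (x y : ℕ × ℕ × Set ℕ) :
    bfIndex (bfMulRaw x y) = bfIndex x * bfIndex y := by
  rw [bfIndex, bfIndex, bfIndex, Bicyclic.mk_mul_mk, bfMulRaw, Bicyclic.mk_inj]
  split_ifs <;> dsimp only <;> omega

namespace BF

def toBicyclic (𝓕 : OmegaFamily) : BF 𝓕 →ₙ* Bicyclic where
  toFun x := bfIndex x.1
  map_mul' x y := bfIndex_bfMulRaw x.1 y.1

lemma toBicyclic_surjective (𝓕 : OmegaFamily) : Function.Surjective (toBicyclic 𝓕) := by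
  obtain ⟨F, hF⟩ := 𝓕.closed.1
  exact fun p => ⟨⟨(p.1, p.2, F), hF⟩, rfl⟩

end BF

theorem statement6_general (𝓕 : OmegaFamily) :
    ∃ f : BF 𝓕 →ₙ* Bicyclic,
      (∀ x : BF 𝓕, f x = ((x.1.1, x.1.2.1) : ℕ × ℕ)) ∧
      Function.Surjective f ∧
      ¬ IsGroupCongruence (Con.ker f) ∧
      ∃ c : Con (BF 𝓕), ¬ IsGroupCongruence c := by
  have hker := not_isGroupCongruence_ker_of_surjective _ (BF.toBicyclic_surjective 𝓕)
  exact ⟨BF.toBicyclic 𝓕, fun _ => rfl, BF.toBicyclic_surjective 𝓕, hker, _, hker⟩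

theorem statement6 (𝓕 : OmegaFamily) (hind : InductiveNonempty 𝓕) :
    ∃ f : BF 𝓕 →ₙ* Bicyclic,
      (∀ x : BF 𝓕, f x = ((x.1.1, x.1.2.1) : ℕ × ℕ)) ∧
      Function.Surjective f ∧
      ¬ IsGroupCongruence (Con.ker f) ∧
      ∃ c : Con (BF 𝓕), ¬ IsGroupCongruence c :=
  statement6_general 𝓕
end

section
/- Let 𝓕 be an ω-closed family of nonempty inductive subsets of ℕ with [k) ∈ 𝓕 for some k ∈ ℕ. Then the subsemigroup B_ω^{𝓕_{≥k}} = {(i,j,[a)) ∈ B_ω^𝓕 : [a) ∈ 𝓕 and a ≥ k} is a homomorphic retract of the semigroup B_ω^𝓕. -/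
/-- A subset `T` of `S` is a homomorphic retract of `S` if it is the image of
a homomorphic retraction, i.e. of an idempotent homomorphism `S → S`. -/
def IsHomRetract {S : Type*} [Mul S] (T : Set S) : Prop :=
  ∃ h : S →ₙ* S, (∀ x, h (h x) = h x) ∧ Set.range h = T

/-!
The retraction is truncation `(i, j, F) ↦ (i, j, F ∩ [k))`. It respects the multiplication
because the only shifts occurring in a product are by nonpositive amounts `-n`, and an
inductive set `U` satisfies `U ⊆ -n + U`, so intersecting with `U` commutes with them.
Its image consists of the triples with `F ⊆ [k)`, which are those with `F = [a)`, `a ≥ k`.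
-/

lemma natShift_inter (s : ℤ) (F G : Set ℕ) :
    natShift s (F ∩ G) = natShift s F ∩ natShift s G := by
  ext m
  simp only [natShift, Set.mem_inter_iff, Set.mem_ofPred_eq]
  constructor
  · rintro ⟨k, ⟨hF, hG⟩, hm⟩
    exact ⟨⟨k, hF, hm⟩, k, hG, hm⟩
  · rintro ⟨⟨k, hF, hk⟩, l, hG, hl⟩
    obtain rfl : k = l := by omega
    exact ⟨k, ⟨hF, hG⟩, hk⟩

lemma IsInductiveSet.add_mem {U : Set ℕ} (hU : IsInductiveSet U) {i : ℕ} (hi : i ∈ U) (n : ℕ) :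
    i + n ∈ U := by
  induction n with
  | zero => exact hi
  | succ n ih => exact hU _ ih

lemma IsInductiveSet.subset_natShift {U : Set ℕ} (hU : IsInductiveSet U) {s : ℤ} (hs : s ≤ 0) :
    U ⊆ natShift s U :=
  fun m hm => ⟨m + (-s).toNat, hU.add_mem hm _, by omega⟩

lemma isInductiveSet_upSet (k : ℕ) : IsInductiveSet (upSet k) :=
  fun _ hi => Nat.le_succ_of_le hi

lemma natShift_inter_inter_of_subset {s : ℤ} {U : Set ℕ} (hU : U ⊆ natShift s U) (F G : Set ℕ) :
    natShift s (F ∩ U) ∩ (G ∩ U) = (natShift s F ∩ G) ∩ U := by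
  rw [natShift_inter]
  ext m
  have := @hU m
  simp only [Set.mem_inter_iff]
  tauto

lemma inter_natShift_inter_of_subset {s : ℤ} {U : Set ℕ} (hU : U ⊆ natShift s U) (F G : Set ℕ) :
    (F ∩ U) ∩ natShift s (G ∩ U) = (F ∩ natShift s G) ∩ U := by
  rw [natShift_inter]
  ext m
  have := @hU m
  simp only [Set.mem_inter_iff]
  tauto

def truncRaw (U : Set ℕ) (p : ℕ × ℕ × Set ℕ) : ℕ × ℕ × Set ℕ := (p.1, p.2.1, p.2.2 ∩ U)

lemma truncRaw_bfMulRaw {U : Set ℕ} (hU : IsInductiveSet U) (x y : ℕ × ℕ × Set ℕ) :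
    truncRaw U (bfMulRaw x y) = bfMulRaw (truncRaw U x) (truncRaw U y) := by
  obtain ⟨i₁, j₁, F₁⟩ := x
  obtain ⟨i₂, j₂, F₂⟩ := y
  unfold bfMulRaw truncRaw
  dsimp only
  split_ifs
  · rw [natShift_inter_inter_of_subset (hU.subset_natShift (by omega))]
  · rw [Set.inter_inter_distrib_right]
  · rw [inter_natShift_inter_of_subset (hU.subset_natShift (by omega))]

lemma OmegaFamily.inter_mem (𝓕 : OmegaFamily) {F G : Set ℕ} (hF : F ∈ 𝓕.sets)
    (hG : G ∈ 𝓕.sets) : F ∩ G ∈ 𝓕.sets := by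
  simpa [natShift_zero] using 𝓕.closed.2 0 F hF G hG

namespace BF

variable {𝓕 : OmegaFamily} {U : Set ℕ}

def truncHom (hU : U ∈ 𝓕.sets) (hUi : IsInductiveSet U) : BF 𝓕 →ₙ* BF 𝓕 where
  toFun x := ⟨truncRaw U x.1, 𝓕.inter_mem x.2 hU⟩
  map_mul' x y := Subtype.ext (truncRaw_bfMulRaw hUi x.1 y.1)

variable (hU : U ∈ 𝓕.sets) (hUi : IsInductiveSet U)

lemma truncHom_apply_of_subset {x : BF 𝓕} (hx : x.1.2.2 ⊆ U) : truncHom hU hUi x = x := by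
  apply Subtype.ext
  change truncRaw U x.1 = x.1
  rw [truncRaw, Set.inter_eq_left.2 hx]

lemma truncHom_truncHom (x : BF 𝓕) : truncHom hU hUi (truncHom hU hUi x) = truncHom hU hUi x :=
  truncHom_apply_of_subset hU hUi Set.inter_subset_right

lemma range_truncHom : Set.range (truncHom hU hUi) = {x | x.1.2.2 ⊆ U} := by
  ext x
  constructor
  · rintro ⟨y, rfl⟩
    exact Set.inter_subset_right
  · intro hx
    exact ⟨x, truncHom_apply_of_subset hU hUi hx⟩

end BF

lemma eq_upSet_sInf_of_isInductiveSet {F : Set ℕ} (hne : F.Nonempty) (hi : IsInductiveSet F) :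
    F = upSet (sInf F) := by
  ext m
  constructor
  · exact fun hm => Nat.sInf_le hm
  · intro hm
    induction m, hm using Nat.le_induction with
    | base => exact Nat.sInf_mem hne
    | succ n _ ih => exact hi n ih

lemma subset_upSet_iff_exists_eq_upSet {F : Set ℕ} (hne : F.Nonempty) (hi : IsInductiveSet F)
    (k : ℕ) : F ⊆ upSet k ↔ ∃ a, k ≤ a ∧ F = upSet a := by
  constructor
  · intro h
    have hF := eq_upSet_sInf_of_isInductiveSet hne hi
    rw [hF] at h
    exact ⟨sInf F, Set.Ici_subset_Ici.1 h, hF⟩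
  · rintro ⟨a, hka, rfl⟩
    exact Set.Ici_subset_Ici.2 hka

theorem statement10 (𝓕 : OmegaFamily) (hind : InductiveNonempty 𝓕)
    (k : ℕ) (hk : upSet k ∈ 𝓕.sets) :
    IsHomRetract {x : BF 𝓕 | ∃ a, k ≤ a ∧ x.1.2.2 = upSet a} := by
  refine ⟨BF.truncHom hk (isInductiveSet_upSet k),
    BF.truncHom_truncHom hk (isInductiveSet_upSet k), ?_⟩
  rw [BF.range_truncHom]
  ext x
  obtain ⟨hne, hi⟩ := hind _ x.2
  exact subset_upSet_iff_exists_eq_upSet hne hi k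
end
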